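/- Let α ∈ ℂ. Define ℂ-linear endomorphisms L_i, H_i, G_i⁺, G_i⁻ (i ∈ ℤ) of V by: L_i x_k = −(i + k)·x_{i+k} for k ≠ 0, L_i x_0 = −(i·α + i²/2)·x_i, L_i y_j = −(i/2 + j)·y_{i+j}; H_i x_k = 0 for k ≠ 0, H_i x_0 = i·x_i, H_i y_j = −y_{i+j}; G_i⁺ x_j = 0 for all j, G_i⁻ y_j = 0 for all j, G_i⁺ y_j = −2(i + j)·x_{i+j}, G_i⁻ x_k = y_{i+k} for k ≠ 0, G_i⁻ x_0 = (α + i)·y_i. Then these operators satisfy the Ramond N=2 relations with zero central charge. -/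

import Mathlib

noncomputable section

/-- The underlying space of the intermediate-series modules: two copies of `ℤ →₀ ℂ`. -/
abbrev V : Type := (ℤ →₀ ℂ) × (ℤ →₀ ℂ)

/-- The basis vectors `x j`. -/
def x (j : ℤ) : V := (Finsupp.single j 1, 0)

/-- The basis vectors `y j`. -/
def y (j : ℤ) : V := (0, Finsupp.single j 1)

/-- Commutator of endomorphisms. -/
def bracket (P Q : V →ₗ[ℂ] V) : V →ₗ[ℂ] V := P ∘ₗ Q - Q ∘ₗ P

/-- Anticommutator of endomorphisms. -/
def abracket (P Q : V →ₗ[ℂ] V) : V →ₗ[ℂ] V := P ∘ₗ Q + Q ∘ₗ P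

/-- The relations of the Ramond N=2 superconformal algebra with zero central charge. -/
def RamondRel (L H Gp Gm : ℤ → (V →ₗ[ℂ] V)) : Prop :=
  (∀ i j : ℤ, bracket (L i) (L j) = ((i : ℂ) - (j : ℂ)) • L (i + j)) ∧
  (∀ i j : ℤ, bracket (L i) (H j) = (-(j : ℂ)) • H (i + j)) ∧
  (∀ i j : ℤ, bracket (H i) (H j) = 0) ∧
  (∀ i j : ℤ, bracket (L i) (Gp j) = ((i : ℂ) / 2 - (j : ℂ)) • Gp (i + j)) ∧
  (∀ i j : ℤ, bracket (L i) (Gm j) = ((i : ℂ) / 2 - (j : ℂ)) • Gm (i + j)) ∧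
  (∀ i j : ℤ, bracket (H i) (Gp j) = Gp (i + j)) ∧
  (∀ i j : ℤ, bracket (H i) (Gm j) = - Gm (i + j)) ∧
  (∀ i j : ℤ, abracket (Gp i) (Gp j) = 0) ∧
  (∀ i j : ℤ, abracket (Gm i) (Gm j) = 0) ∧
  (∀ i j : ℤ, abracket (Gm i) (Gp j) = (2 : ℂ) • L (i + j) - ((i : ℂ) - (j : ℂ)) • H (i + j))

lemma smul_x (c : ℂ) (j : ℤ) : c • x j = ((Finsupp.single j c : ℤ →₀ ℂ), (0 : ℤ →₀ ℂ)) := by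
  rw [x, Prod.smul_mk, smul_zero, Finsupp.smul_single, smul_eq_mul, mul_one]

lemma smul_y (c : ℂ) (j : ℤ) : c • y j = ((0 : ℤ →₀ ℂ), (Finsupp.single j c : ℤ →₀ ℂ)) := by
  rw [y, Prod.smul_mk, smul_zero, Finsupp.smul_single, smul_eq_mul, mul_one]

lemma ext_xy {f g : V →ₗ[ℂ] V}
    (hx : ∀ j, f (x j) = g (x j)) (hy : ∀ j, f (y j) = g (y j)) : f = g := by
  have h1 : ∀ p : ℤ →₀ ℂ, f (p, 0) = g (p, 0) := by
    intro p
    induction p using Finsupp.induction_linear with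
    | zero => show f (0:V) = g (0:V); simp
    | add a b ha hb =>
        have : ((a + b : ℤ →₀ ℂ), (0:ℤ →₀ ℂ)) = ((a, 0) : V) + (b, 0) := by
          simp [Prod.ext_iff]
        rw [this, map_add, map_add, ha, hb]
    | single j c =>
        rw [← smul_x, map_smul, map_smul, hx]
  have h2 : ∀ p : ℤ →₀ ℂ, f (0, p) = g (0, p) := by
    intro p
    induction p using Finsupp.induction_linear with
    | zero => show f (0:V) = g (0:V); simp
    | add a b ha hb =>
        have : ((0:ℤ →₀ ℂ), (a + b : ℤ →₀ ℂ)) = ((0, a) : V) + (0, b) := by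
          simp [Prod.ext_iff]
        rw [this, map_add, map_add, ha, hb]
    | single j c =>
        rw [← smul_y, map_smul, map_smul, hy]
  apply LinearMap.ext; intro v
  have : v = ((v.1, 0) : V) + (0, v.2) := by simp [Prod.ext_iff]
  rw [this, map_add, map_add, h1, h2]
theorem stmt_16 (α : ℂ) (L H Gp Gm : ℤ → (V →ₗ[ℂ] V))
    (hLx : ∀ i k : ℤ, k ≠ 0 → L i (x k) = (-((i : ℂ) + (k : ℂ))) • x (i + k))
    (hLx0 : ∀ i : ℤ, L i (x 0) = (-((i : ℂ) * α + (i : ℂ)^2 / 2)) • x i)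
    (hLy : ∀ i j : ℤ, L i (y j) = (-((i : ℂ) / 2 + (j : ℂ))) • y (i + j))
    (hHx : ∀ i k : ℤ, k ≠ 0 → H i (x k) = 0)
    (hHx0 : ∀ i : ℤ, H i (x 0) = (i : ℂ) • x i)
    (hHy : ∀ i j : ℤ, H i (y j) = (-1 : ℂ) • y (i + j))
    (hGpx : ∀ i j : ℤ, Gp i (x j) = 0)
    (hGmy : ∀ i j : ℤ, Gm i (y j) = 0)
    (hGpy : ∀ i j : ℤ, Gp i (y j) = (-(2 * ((i : ℂ) + (j : ℂ)))) • x (i + j))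
    (hGmx : ∀ i k : ℤ, k ≠ 0 → Gm i (x k) = y (i + k))
    (hGmx0 : ∀ i : ℤ, Gm i (x 0) = (α + (i : ℂ)) • y i) :
    RamondRel L H Gp Gm := by
  have Lx : ∀ i k : ℤ, L i (x k)
      = (if k = 0 then -((i:ℂ) * α + (i:ℂ)^2 / 2) else -((i:ℂ) + (k:ℂ))) • x (i + k) := by
    intro i k
    rcases eq_or_ne k 0 with rfl | hk
    · simpa using hLx0 i
    · rw [hLx i k hk, if_neg hk]
  have Hx : ∀ i k : ℤ, H i (x k) = (if k = 0 then (i:ℂ) else 0) • x (i + k) := by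
    intro i k
    rcases eq_or_ne k 0 with rfl | hk
    · simpa using hHx0 i
    · rw [hHx i k hk, if_neg hk, zero_smul]
  have Gmx : ∀ i k : ℤ, Gm i (x k) = (if k = 0 then α + (i:ℂ) else 1) • y (i + k) := by
    intro i k
    rcases eq_or_ne k 0 with rfl | hk
    · simpa using hGmx0 i
    · rw [hGmx i k hk, if_neg hk, one_smul]
  refine ⟨?_, ?_, ?_, ?_, ?_, ?_, ?_, ?_, ?_, ?_⟩ <;> intro i j <;>
    refine ext_xy (fun k => ?_) (fun k => ?_) <;>
    simp only [bracket, abracket, LinearMap.sub_apply, LinearMap.add_apply,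
      LinearMap.comp_apply, LinearMap.smul_apply, LinearMap.zero_apply,
      LinearMap.neg_apply]
  all_goals
    simp only [Lx, Hx, Gmx, hLy, hHy, hGpx, hGmy, hGpy, map_smul, map_zero, smul_smul,
      smul_zero, zero_smul, sub_zero, zero_sub, add_zero, zero_add, neg_zero]
  all_goals
    (try split_ifs with h1 h2 h3 h4 h5 h6 h7 h8 h9 h10 h11 h12) <;>
      first
        | (exfalso; omega)
        | ((try simp only [add_eq_zero_iff_eq_neg] at h1);
           (try simp only [add_eq_zero_iff_eq_neg] at h2);
           (try simp only [add_eq_zero_iff_eq_neg] at h3);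
           (try simp only [add_eq_zero_iff_eq_neg] at h4);
           (try simp only [add_eq_zero_iff_eq_neg] at h5);
           (try simp only [add_eq_zero_iff_eq_neg] at h6);
           (try simp only [add_eq_zero_iff_eq_neg] at h7);
           (try simp only [add_eq_zero_iff_eq_neg] at h8);
           (try simp only [add_eq_zero_iff_eq_neg] at h9);
           (try simp only [add_eq_zero_iff_eq_neg] at h10);
           (try simp only [add_eq_zero_iff_eq_neg] at h11);
           (try simp only [add_eq_zero_iff_eq_neg] at h12);
           (try subst_eqs);
           push_cast; ring_nf; module)
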